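/- Under the hypotheses that g : Δ → ℝ is co-ordinated convex and f is co-ordinated g-convex dominated on Δ = [a,b] × [c,d], with H_φ(t,s) = (1/((b-a)(d-c))) ∫_a^b ∫_c^d φ(tx+(1-t)(a+b)/2, sy+(1-s)(c+d)/2) dx dy, one has 0 ≤ |H_f(t₂,s₂) - H_f(t₁,s₁)| ≤ H_g(t₂,s₂) - H_g(t₁,s₁) for all 0 ≤ t₁ ≤ t₂ ≤ 1 and 0 ≤ s₁ ≤ s₂ ≤ 1. -/

import Mathlib

open MeasureTheory

def ConvexDominated (I : Set ℝ) (ψ φ : ℝ → ℝ) : Prop :=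
  ∀ u ∈ I, ∀ v ∈ I, ∀ l : ℝ, l ∈ Set.Icc (0:ℝ) 1 →
    |l * φ u + (1 - l) * φ v - φ (l * u + (1 - l) * v)| ≤
      l * ψ u + (1 - l) * ψ v - ψ (l * u + (1 - l) * v)

def CoordConvexDominated (a b c d : ℝ) (g f : ℝ → ℝ → ℝ) : Prop :=
  (∀ x ∈ Set.Icc a b, ConvexDominated (Set.Icc c d) (fun u => g x u) (fun u => f x u)) ∧
  (∀ y ∈ Set.Icc c d, ConvexDominated (Set.Icc a b) (fun w => g w y) (fun w => f w y))

def CoordConvexOn (a b c d : ℝ) (f : ℝ → ℝ → ℝ) : Prop :=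
  (∀ y ∈ Set.Icc c d, ConvexOn ℝ (Set.Icc a b) (fun x => f x y)) ∧
  (∀ x ∈ Set.Icc a b, ConvexOn ℝ (Set.Icc c d) (fun y => f x y))

/-- The Dragomir mapping `H` associated to a function on `[a,b] × [c,d]`. -/
noncomputable def Hmap (a b c d : ℝ) (φ : ℝ → ℝ → ℝ) (t s : ℝ) : ℝ :=
  (1 / ((b - a) * (d - c))) *
    ∫ x in a..b, ∫ y in c..d,
      φ (t * x + (1 - t) * (a + b) / 2) (s * y + (1 - s) * (c + d) / 2)


/-!
Write `H¹_φ(t) = ∫_α^β φ(t x + (1 - t) m) dx` with `m = (α + β) / 2`. Pairing `x` with its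
reflection `α + β - x`, the integrand becomes `φ(m + t u) + φ(m - t u)`, an even convex function
of `t`, so `H¹_φ` is nondecreasing on `[0, 1]` for convex `φ`. The two-variable map `H_φ` is
`H¹` applied twice, and integrating convex sections in one variable preserves convexity in the
other, so `H_φ` is nondecreasing in each variable for co-ordinated convex `φ`. Domination says
exactly that `g + f` and `g - f` are co-ordinated convex; since `H` is linear,
`H_g = (H_{g+f} + H_{g-f}) / 2` and `H_f = (H_{g+f} - H_{g-f}) / 2`, and the monotonicity of
`H_{g±f}` gives the bound.
-/

open Set

section OneVariable

variable {α β : ℝ} {φ : ℝ → ℝ}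

theorem ConvexOn.map_add_mul_add_map_sub_mul_le {s : Set ℝ} (hφ : ConvexOn ℝ s φ)
    {m u t₁ t₂ : ℝ} (hadd : m + t₂ * u ∈ s) (hsub : m - t₂ * u ∈ s) (ht₁ : 0 ≤ t₁)
    (ht₁₂ : t₁ ≤ t₂) :
    φ (m + t₁ * u) + φ (m - t₁ * u) ≤ φ (m + t₂ * u) + φ (m - t₂ * u) := by
  rcases (ht₁.trans ht₁₂).eq_or_lt with ht₂ | ht₂
  · obtain rfl : t₁ = 0 := le_antisymm (ht₂ ▸ ht₁₂) ht₁
    rw [← ht₂]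
  -- `m ± t₁ u` are the convex combinations of `m ± t₂ u` with weights `l, 1 - l` and `1 - l, l`
  set l := (t₂ + t₁) / (2 * t₂)
  have hl₀ : 0 ≤ l := by positivity
  have hl₁ : 0 ≤ 1 - l := by
    rw [sub_nonneg, div_le_one (by positivity)]
    linarith
  have h₁ := hφ.2 hadd hsub hl₀ hl₁ (add_sub_cancel l 1)
  have h₂ := hφ.2 hadd hsub hl₁ hl₀ (sub_add_cancel 1 l)
  have e₁ : l • (m + t₂ * u) + (1 - l) • (m - t₂ * u) = m + t₁ * u := by
    simp only [l, smul_eq_mul]; field_simp; ring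
  have e₂ : (1 - l) • (m + t₂ * u) + l • (m - t₂ * u) = m - t₁ * u := by
    simp only [l, smul_eq_mul]; field_simp; ring
  rw [e₁, smul_eq_mul, smul_eq_mul] at h₁
  rw [e₂, smul_eq_mul, smul_eq_mul] at h₂
  linarith

theorem ConvexOn.intervalIntegrable (hαβ : α ≤ β) (hφ : ConvexOn ℝ (Icc α β) φ) :
    IntervalIntegrable φ volume α β := by
  rw [intervalIntegrable_iff_integrableOn_Ioo_of_le hαβ]
  have hcont : ContinuousOn φ (Ioo α β) := by
    simpa only [interior_Icc] using hφ.continuousOn_interior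
  set M := max (φ α) (φ β)
  set m := (α + β) / 2
  have hupper : ∀ x ∈ Icc α β, φ x ≤ M := fun x hx =>
    hφ.le_on_segment (left_mem_Icc.2 hαβ) (right_mem_Icc.2 hαβ) (by rwa [segment_eq_Icc hαβ])
  have hlower : ∀ x ∈ Icc α β, 2 * φ m - M ≤ φ x := by
    intro x hx
    have hsymm := hφ.map_add_mul_add_map_sub_mul_le (m := m) (u := x - m) (t₁ := 0) (t₂ := 1)
      (by simpa [m] using hx) (by simp only [m]; constructor <;> linarith [hx.1, hx.2])
      le_rfl zero_le_one
    have := hupper (m - 1 * (x - m)) (by simp only [m]; constructor <;> linarith [hx.1, hx.2])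
    simp only [zero_mul, add_zero, sub_zero, one_mul, add_sub_cancel] at hsymm this
    linarith
  refine IntegrableOn.of_bound measure_Ioo_lt_top (hcont.aestronglyMeasurable measurableSet_Ioo)
    (max |M| |2 * φ m - M|) (ae_restrict_of_forall_mem measurableSet_Ioo fun x hx => ?_)
  have h₁ := hupper x (Ioo_subset_Icc_self hx)
  have h₂ := hlower x (Ioo_subset_Icc_self hx)
  rw [Real.norm_eq_abs, abs_le]
  constructor <;> linarith [le_max_left |M| |2 * φ m - M|, le_max_right |M| |2 * φ m - M|,
    neg_abs_le (2 * φ m - M), le_abs_self M]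

noncomputable def dragomirIntegral (α β : ℝ) (φ : ℝ → ℝ) (t : ℝ) : ℝ :=
  ∫ x in α..β, φ (t * x + (1 - t) * (α + β) / 2)

theorem ConvexOn.comp_mul_add {s I : Set ℝ} (hφ : ConvexOn ℝ s φ) (hI : Convex ℝ I) {k c : ℝ}
    (hmaps : MapsTo (fun x => k * x + c) I s) : ConvexOn ℝ I (fun x => φ (k * x + c)) := by
  refine ⟨hI, fun x hx y hy p q hp hq hpq => ?_⟩
  have h := hφ.2 (hmaps hx) (hmaps hy) hp hq hpq
  simp only [smul_eq_mul] at h ⊢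
  convert h using 2
  linear_combination (-c) * hpq

theorem mapsTo_mul_add_Icc {t : ℝ} (ht : t ∈ Icc (0 : ℝ) 1) :
    MapsTo (fun x => t * x + (1 - t) * (α + β) / 2) (Icc α β) (Icc α β) := by
  intro x hx
  obtain ⟨ht₀, ht₁⟩ := ht
  obtain ⟨hx₁, hx₂⟩ := hx
  constructor <;> nlinarith

theorem ConvexOn.intervalIntegrable_comp_mul_add (hαβ : α ≤ β) (hφ : ConvexOn ℝ (Icc α β) φ)
    {t : ℝ} (ht : t ∈ Icc (0 : ℝ) 1) :
    IntervalIntegrable (fun x => φ (t * x + (1 - t) * (α + β) / 2)) volume α β :=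
  (hφ.comp_mul_add (convex_Icc α β) (mapsTo_mul_add_Icc ht)).intervalIntegrable hαβ

theorem ConvexOn.intervalIntegrable_comp_mul_add_reflect (hαβ : α ≤ β)
    (hφ : ConvexOn ℝ (Icc α β) φ) {t : ℝ} (ht : t ∈ Icc (0 : ℝ) 1) :
    IntervalIntegrable (fun x => φ (t * (α + β - x) + (1 - t) * (α + β) / 2)) volume α β := by
  simpa only [add_sub_cancel_left, add_sub_cancel_right] using
    ((hφ.intervalIntegrable_comp_mul_add hαβ ht).comp_sub_left (α + β)).symm

theorem two_mul_dragomirIntegral (φ : ℝ → ℝ) (t : ℝ)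
    (hint : IntervalIntegrable (fun x => φ (t * x + (1 - t) * (α + β) / 2)) volume α β)
    (hint' : IntervalIntegrable (fun x => φ (t * (α + β - x) + (1 - t) * (α + β) / 2))
      volume α β) :
    2 * dragomirIntegral α β φ t = ∫ x in α..β,
      (φ (t * x + (1 - t) * (α + β) / 2) + φ (t * (α + β - x) + (1 - t) * (α + β) / 2)) := by
  have hrefl := intervalIntegral.integral_comp_sub_left
    (fun x => φ (t * x + (1 - t) * (α + β) / 2)) (a := α) (b := β) (α + β)
  simp only [add_sub_cancel_left, add_sub_cancel_right] at hrefl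
  rw [intervalIntegral.integral_add hint hint', hrefl, two_mul, dragomirIntegral]

theorem ConvexOn.monotoneOn_dragomirIntegral (hαβ : α ≤ β) (hφ : ConvexOn ℝ (Icc α β) φ) :
    MonotoneOn (dragomirIntegral α β φ) (Icc 0 1) := by
  intro t₁ ht₁ t₂ ht₂ ht₁₂
  have hint {t : ℝ} (ht : t ∈ Icc (0 : ℝ) 1) := hφ.intervalIntegrable_comp_mul_add hαβ ht
  have hint' {t : ℝ} (ht : t ∈ Icc (0 : ℝ) 1) :=
    hφ.intervalIntegrable_comp_mul_add_reflect hαβ ht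
  refine le_of_mul_le_mul_left ?_ two_pos
  rw [two_mul_dragomirIntegral φ t₁ (hint ht₁) (hint' ht₁),
    two_mul_dragomirIntegral φ t₂ (hint ht₂) (hint' ht₂)]
  refine intervalIntegral.integral_mono_on hαβ ((hint ht₁).add (hint' ht₁))
    ((hint ht₂).add (hint' ht₂)) fun x hx => ?_
  have hx' : α + β - x ∈ Icc α β := ⟨by linarith [hx.2], by linarith [hx.1]⟩
  -- both integrands are `φ (m + t u) + φ (m - t u)` with `m = (α + β) / 2`, `u = x - m`
  have key := hφ.map_add_mul_add_map_sub_mul_le (m := (α + β) / 2) (u := x - (α + β) / 2)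
    (by convert mapsTo_mul_add_Icc ht₂ hx using 1; ring)
    (by convert mapsTo_mul_add_Icc ht₂ hx' using 1; ring) ht₁.1 ht₁₂
  convert key using 3 <;> ring

theorem dragomirIntegral_mono {φ₁ φ₂ : ℝ → ℝ} (hαβ : α ≤ β) (hφ₁ : ConvexOn ℝ (Icc α β) φ₁)
    (hφ₂ : ConvexOn ℝ (Icc α β) φ₂) (h : ∀ x ∈ Icc α β, φ₁ x ≤ φ₂ x) {t : ℝ}
    (ht : t ∈ Icc (0 : ℝ) 1) : dragomirIntegral α β φ₁ t ≤ dragomirIntegral α β φ₂ t :=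
  intervalIntegral.integral_mono_on hαβ (hφ₁.intervalIntegrable_comp_mul_add hαβ ht)
    (hφ₂.intervalIntegrable_comp_mul_add hαβ ht) fun _ hx => h _ (mapsTo_mul_add_Icc ht hx)

theorem dragomirIntegral_eq_mul_add_mul {φ₁ φ₂ : ℝ → ℝ} {p q : ℝ} (hαβ : α ≤ β)
    (hφ₁ : ConvexOn ℝ (Icc α β) φ₁) (hφ₂ : ConvexOn ℝ (Icc α β) φ₂)
    (h : ∀ x ∈ Icc α β, φ x = p * φ₁ x + q * φ₂ x) {t : ℝ} (ht : t ∈ Icc (0 : ℝ) 1) :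
    dragomirIntegral α β φ t = p * dragomirIntegral α β φ₁ t + q * dragomirIntegral α β φ₂ t := by
  unfold dragomirIntegral
  rw [← intervalIntegral.integral_const_mul, ← intervalIntegral.integral_const_mul,
    ← intervalIntegral.integral_add ((hφ₁.intervalIntegrable_comp_mul_add hαβ ht).const_mul p)
      ((hφ₂.intervalIntegrable_comp_mul_add hαβ ht).const_mul q)]
  refine intervalIntegral.integral_congr fun x hx => h _ (mapsTo_mul_add_Icc ht ?_)
  rwa [uIcc_of_le hαβ] at hx

end OneVariable

theorem ConvexDominated.convexOn_add {I : Set ℝ} {ψ φ : ℝ → ℝ} (hI : Convex ℝ I)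
    (h : ConvexDominated I ψ φ) : ConvexOn ℝ I (fun x => ψ x + φ x) := by
  refine ⟨hI, fun x hx y hy p q hp hq hpq => ?_⟩
  obtain rfl : q = 1 - p := by linarith
  have := (abs_le.1 (h x hx y hy p ⟨hp, by linarith⟩)).1
  simp only [smul_eq_mul]
  linarith

theorem ConvexDominated.convexOn_sub {I : Set ℝ} {ψ φ : ℝ → ℝ} (hI : Convex ℝ I)
    (h : ConvexDominated I ψ φ) : ConvexOn ℝ I (fun x => ψ x - φ x) := by
  refine ⟨hI, fun x hx y hy p q hp hq hpq => ?_⟩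
  obtain rfl : q = 1 - p := by linarith
  have := (abs_le.1 (h x hx y hy p ⟨hp, by linarith⟩)).2
  simp only [smul_eq_mul]
  linarith

section TwoVariables

variable {a b c d : ℝ} {φ : ℝ → ℝ → ℝ}

theorem hmap_eq_dragomirIntegral (t s : ℝ) : Hmap a b c d φ t s =
    1 / ((b - a) * (d - c)) * dragomirIntegral a b (fun x => dragomirIntegral c d (φ x) s) t :=
  rfl

theorem CoordConvexOn.convexOn_dragomirIntegral (hφ : CoordConvexOn a b c d φ) (hcd : c ≤ d)
    {s : ℝ} (hs : s ∈ Icc (0 : ℝ) 1) :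
    ConvexOn ℝ (Icc a b) (fun x => dragomirIntegral c d (φ x) s) := by
  simp only [dragomirIntegral, intervalIntegral.integral_of_le hcd]
  refine integral_convexOn_of_integrand_ae (convex_Icc a b) ?_ fun x hx => ?_
  · exact ae_restrict_of_forall_mem measurableSet_Ioc fun y hy =>
      hφ.1 _ (mapsTo_mul_add_Icc hs (Ioc_subset_Icc_self hy))
  · exact ((hφ.2 x hx).intervalIntegrable_comp_mul_add hcd hs).1

theorem CoordConvexOn.hmap_mono (hφ : CoordConvexOn a b c d φ) (hab : a ≤ b) (hcd : c ≤ d)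
    {t₁ t₂ s₁ s₂ : ℝ} (ht₁ : 0 ≤ t₁) (ht₁₂ : t₁ ≤ t₂) (ht₂ : t₂ ≤ 1) (hs₁ : 0 ≤ s₁)
    (hs₁₂ : s₁ ≤ s₂) (hs₂ : s₂ ≤ 1) : Hmap a b c d φ t₁ s₁ ≤ Hmap a b c d φ t₂ s₂ := by
  have hs₁' : s₁ ∈ Icc (0 : ℝ) 1 := ⟨hs₁, hs₁₂.trans hs₂⟩
  have hs₂' : s₂ ∈ Icc (0 : ℝ) 1 := ⟨hs₁.trans hs₁₂, hs₂⟩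
  have hk : 0 ≤ 1 / ((b - a) * (d - c)) := by
    have := sub_nonneg.2 hab; have := sub_nonneg.2 hcd; positivity
  rw [hmap_eq_dragomirIntegral, hmap_eq_dragomirIntegral]
  refine mul_le_mul_of_nonneg_left ?_ hk
  calc dragomirIntegral a b (fun x => dragomirIntegral c d (φ x) s₁) t₁
      ≤ dragomirIntegral a b (fun x => dragomirIntegral c d (φ x) s₂) t₁ :=
        dragomirIntegral_mono hab (hφ.convexOn_dragomirIntegral hcd hs₁')
          (hφ.convexOn_dragomirIntegral hcd hs₂')
          (fun x hx => (hφ.2 x hx).monotoneOn_dragomirIntegral hcd hs₁' hs₂' hs₁₂)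
          ⟨ht₁, ht₁₂.trans ht₂⟩
    _ ≤ dragomirIntegral a b (fun x => dragomirIntegral c d (φ x) s₂) t₂ :=
        (hφ.convexOn_dragomirIntegral hcd hs₂').monotoneOn_dragomirIntegral hab
          ⟨ht₁, ht₁₂.trans ht₂⟩ ⟨ht₁.trans ht₁₂, ht₂⟩ ht₁₂

theorem hmap_eq_mul_add_mul {ψ₁ ψ₂ : ℝ → ℝ → ℝ} {p q : ℝ} (hab : a ≤ b) (hcd : c ≤ d)
    (hψ₁ : CoordConvexOn a b c d ψ₁) (hψ₂ : CoordConvexOn a b c d ψ₂)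
    (h : ∀ x ∈ Icc a b, ∀ y ∈ Icc c d, φ x y = p * ψ₁ x y + q * ψ₂ x y) {t s : ℝ}
    (ht : t ∈ Icc (0 : ℝ) 1) (hs : s ∈ Icc (0 : ℝ) 1) :
    Hmap a b c d φ t s = p * Hmap a b c d ψ₁ t s + q * Hmap a b c d ψ₂ t s := by
  simp only [hmap_eq_dragomirIntegral]
  rw [dragomirIntegral_eq_mul_add_mul hab (hψ₁.convexOn_dragomirIntegral hcd hs)
    (hψ₂.convexOn_dragomirIntegral hcd hs) (fun x hx => dragomirIntegral_eq_mul_add_mul hcd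
      (hψ₁.2 x hx) (hψ₂.2 x hx) (h x hx) hs) ht]
  ring

theorem CoordConvexDominated.coordConvexOn_add {g f : ℝ → ℝ → ℝ}
    (h : CoordConvexDominated a b c d g f) :
    CoordConvexOn a b c d (fun x y => g x y + f x y) :=
  ⟨fun y hy => (h.2 y hy).convexOn_add (convex_Icc a b),
    fun x hx => (h.1 x hx).convexOn_add (convex_Icc c d)⟩

theorem CoordConvexDominated.coordConvexOn_sub {g f : ℝ → ℝ → ℝ}
    (h : CoordConvexDominated a b c d g f) :
    CoordConvexOn a b c d (fun x y => g x y - f x y) :=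
  ⟨fun y hy => (h.2 y hy).convexOn_sub (convex_Icc a b),
    fun x hx => (h.1 x hx).convexOn_sub (convex_Icc c d)⟩

end TwoVariables

theorem stmt17_general (a b c d : ℝ) (hab : a < b) (hcd : c < d) (g f : ℝ → ℝ → ℝ)
    (hdom : CoordConvexDominated a b c d g f) :
    ∀ t₁ t₂ s₁ s₂ : ℝ, 0 ≤ t₁ → t₁ ≤ t₂ → t₂ ≤ 1 → 0 ≤ s₁ → s₁ ≤ s₂ → s₂ ≤ 1 →
      0 ≤ |Hmap a b c d f t₂ s₂ - Hmap a b c d f t₁ s₁| ∧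
      |Hmap a b c d f t₂ s₂ - Hmap a b c d f t₁ s₁| ≤
        Hmap a b c d g t₂ s₂ - Hmap a b c d g t₁ s₁ := by
  intro t₁ t₂ s₁ s₂ ht₁ ht₁₂ ht₂ hs₁ hs₁₂ hs₂
  refine ⟨abs_nonneg _, ?_⟩
  have hadd := hdom.coordConvexOn_add
  have hsub := hdom.coordConvexOn_sub
  have hmono_add := hadd.hmap_mono hab.le hcd.le ht₁ ht₁₂ ht₂ hs₁ hs₁₂ hs₂
  have hmono_sub := hsub.hmap_mono hab.le hcd.le ht₁ ht₁₂ ht₂ hs₁ hs₁₂ hs₂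
  have hg {t s : ℝ} (ht : t ∈ Icc (0 : ℝ) 1) (hs : s ∈ Icc (0 : ℝ) 1) :=
    hmap_eq_mul_add_mul (φ := g) (p := 1 / 2) (q := 1 / 2) hab.le hcd.le hadd hsub
      (fun x _ y _ => by ring) ht hs
  have hf {t s : ℝ} (ht : t ∈ Icc (0 : ℝ) 1) (hs : s ∈ Icc (0 : ℝ) 1) :=
    hmap_eq_mul_add_mul (φ := f) (p := 1 / 2) (q := -1 / 2) hab.le hcd.le hadd hsub
      (fun x _ y _ => by ring) ht hs
  have ht₁' : t₁ ∈ Icc (0 : ℝ) 1 := ⟨ht₁, ht₁₂.trans ht₂⟩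
  have ht₂' : t₂ ∈ Icc (0 : ℝ) 1 := ⟨ht₁.trans ht₁₂, ht₂⟩
  have hs₁' : s₁ ∈ Icc (0 : ℝ) 1 := ⟨hs₁, hs₁₂.trans hs₂⟩
  have hs₂' : s₂ ∈ Icc (0 : ℝ) 1 := ⟨hs₁.trans hs₁₂, hs₂⟩
  rw [hg ht₁' hs₁', hg ht₂' hs₂', hf ht₁' hs₁', hf ht₂' hs₂', abs_le]
  constructor <;> linarith

theorem stmt17 (a b c d : ℝ) (hab : a < b) (hcd : c < d) (g f : ℝ → ℝ → ℝ)
    (hg : CoordConvexOn a b c d g) (hdom : CoordConvexDominated a b c d g f)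
    (hfint : IntegrableOn (fun q : ℝ × ℝ => f q.1 q.2) (Set.Icc a b ×ˢ Set.Icc c d))
    (hgint : IntegrableOn (fun q : ℝ × ℝ => g q.1 q.2) (Set.Icc a b ×ˢ Set.Icc c d)) :
    ∀ t₁ t₂ s₁ s₂ : ℝ, 0 ≤ t₁ → t₁ ≤ t₂ → t₂ ≤ 1 → 0 ≤ s₁ → s₁ ≤ s₂ → s₂ ≤ 1 →
      0 ≤ |Hmap a b c d f t₂ s₂ - Hmap a b c d f t₁ s₁| ∧
      |Hmap a b c d f t₂ s₂ - Hmap a b c d f t₁ s₁| ≤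
        Hmap a b c d g t₂ s₂ - Hmap a b c d g t₁ s₁ :=
  stmt17_general a b c d hab hcd g f hdom
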